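/- arXiv:0712.0049 — 4 statements merged into one kernel-verified Lean document; each statement's English description precedes it below -/
import Mathlib

section
/- Let a_1, …, a_n be positive integers with α = Σ_{i=1}^n 1/a_i < 1, let r_1, …, r_n be arbitrary integers, and let I be a set of N consecutive integers such that at most q elements of I do NOT belong to ⋃_{i=1}^n (r_i + a_i ℤ). Then N < (n + q)/(1 − α) + 1. -/
open Finset

lemma count_classes_le (m : ℤ) (N : ℕ) (a : ℕ) (ha : 0 < a) (v : ℤ) :
    (((Finset.Ico m (m + (N : ℤ))).filter (fun x => (a : ℤ) ∣ x - v)).card : ℚ)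
      ≤ (N : ℚ) / a + 1 := by
  have ha' : (0 : ℤ) < (a : ℤ) := by exact_mod_cast ha
  have hpred : ∀ x : ℤ, ((a : ℤ) ∣ x - v) ↔ x ≡ v [ZMOD (a : ℤ)] := by
    intro x
    rw [Int.modEq_iff_dvd, dvd_sub_comm]
  have hcard := Int.Ico_filter_modEq_card m (m + (N : ℤ)) ha' v
  have hfe : (Finset.Ico m (m + (N : ℤ))).filter (fun x => (a : ℤ) ∣ x - v)
      = (Finset.Ico m (m + (N : ℤ))).filter (fun x => x ≡ v [ZMOD (a : ℤ)]) := by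
    apply Finset.filter_congr; intro x _; simp [hpred x]
  rw [hfe]
  have key : (((Finset.Ico m (m + (N : ℤ))).filter
      (fun x => x ≡ v [ZMOD (a : ℤ)])).card : ℤ)
      ≤ ⌈(N : ℚ) / a⌉ := by
    rw [hcard]
    push_cast
    have h1 : ⌈((m : ℚ) + N - v) / (a : ℚ)⌉ - ⌈((m : ℚ) - v) / (a : ℚ)⌉
        ≤ ⌈(N : ℚ) / a⌉ := by
      have heq : ((m : ℚ) + N - v) / (a : ℚ)
          = ((m : ℚ) - v) / (a : ℚ) + (N : ℚ) / a := by
        field_simp; ring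
      rw [heq]
      have := Int.ceil_add_le (((m : ℚ) - v) / (a : ℚ)) ((N : ℚ) / a)
      omega
    have h2 : (0 : ℤ) ≤ ⌈(N : ℚ) / a⌉ := by
      apply Int.ceil_nonneg
      positivity
    omega
  have key' : (((Finset.Ico m (m + (N : ℤ))).filter
      (fun x => x ≡ v [ZMOD (a : ℤ)])).card : ℚ) ≤ (⌈(N : ℚ) / a⌉ : ℚ) := by
    exact_mod_cast key
  refine key'.trans ?_
  exact le_of_lt (Int.ceil_lt_add_one _)

/-- Main Theorem core: if an interval of `N` consecutive integers has at most `q`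
points outside the union of the residue classes, then `N < (n+q)/(1-α) + 1`. -/
theorem series_length_lt_main_bound
    (n : ℕ) (a : Fin n → ℕ) (ha : ∀ i, 0 < a i)
    (α : ℚ) (hα : α = ∑ i, (1 : ℚ) / (a i)) (hα1 : α < 1)
    (r : Fin n → ℤ) (q N : ℕ) (m : ℤ)
    (h : {x : ℤ | x ∈ Set.Ico m (m + (N : ℤ)) ∧ ¬∃ i, (a i : ℤ) ∣ x - r i}.ncard ≤ q) :
    (N : ℚ) < ((n : ℚ) + (q : ℚ)) / (1 - α) + 1 := by
  set I : Finset ℤ := Finset.Ico m (m + (N : ℤ)) with hI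
  have hIcard : I.card = N := by
    rw [hI, Int.card_Ico]; omega
  -- uncovered set as a finset
  set U : Finset ℤ := I.filter (fun x => ¬∃ i, (a i : ℤ) ∣ x - r i) with hU
  have hUset : {x : ℤ | x ∈ Set.Ico m (m + (N : ℤ)) ∧ ¬∃ i, (a i : ℤ) ∣ x - r i} = ↑U := by
    ext x
    simp [hU, hI, Set.mem_Ico, Finset.mem_Ico]
  have hUq : U.card ≤ q := by
    rw [hUset, Set.ncard_coe_finset] at h; exact h
  set C : Finset ℤ := I.filter (fun x => ∃ i, (a i : ℤ) ∣ x - r i) with hC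
  have hsplit : C.card + U.card = N := by
    rw [hC, hU, Finset.card_filter_add_card_filter_not, hIcard]
  -- bound C by union
  have hCsub : C ⊆ Finset.univ.biUnion (fun i : Fin n => I.filter (fun x => (a i : ℤ) ∣ x - r i)) := by
    intro x hx
    rw [hC, Finset.mem_filter] at hx
    obtain ⟨hxI, i, hi⟩ := hx
    exact Finset.mem_biUnion.2 ⟨i, Finset.mem_univ i, Finset.mem_filter.2 ⟨hxI, hi⟩⟩
  have hCle : C.card ≤ ∑ i : Fin n, (I.filter (fun x => (a i : ℤ) ∣ x - r i)).card :=
    (Finset.card_le_card hCsub).trans Finset.card_biUnion_le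
  -- rational bound
  have hCleQ : (C.card : ℚ) ≤ α * N + n := by
    calc (C.card : ℚ) ≤ ∑ i : Fin n, ((I.filter (fun x => (a i : ℤ) ∣ x - r i)).card : ℚ) := by
          exact_mod_cast hCle
      _ ≤ ∑ i : Fin n, ((N : ℚ) / (a i) + 1) :=
          Finset.sum_le_sum fun i _ => count_classes_le m N (a i) (ha i) (r i)
      _ = α * N + n := by
          rw [Finset.sum_add_distrib, hα, Finset.sum_mul]
          simp [div_eq_mul_inv, mul_comm]
  have hNle : (N : ℚ) ≤ α * N + n + q := by
    have : (N : ℚ) = (C.card : ℚ) + (U.card : ℚ) := by exact_mod_cast hsplit.symm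
    have hq : (U.card : ℚ) ≤ q := by exact_mod_cast hUq
    linarith
  have h1α : (0 : ℚ) < 1 - α := by linarith
  have : (N : ℚ) * (1 - α) ≤ n + q := by ring_nf; ring_nf at hNle; linarith
  have hNle2 : (N : ℚ) ≤ ((n : ℚ) + q) / (1 - α) := by
    rw [le_div_iff₀ h1α]; linarith
  linarith
end

section
/- Fix integers d ≥ 2 and r ≥ 1. For 0 ≤ k < r and 1 ≤ m ≤ d−1, consider the n = r(d−1) residue classes m·d^k + d^{k+1}ℤ. Then every integer x with 1 ≤ x ≤ d^r − 1 lies in exactly one of these classes, and an integer x lies in none of them if and only if d^r divides x. In particular these classes cover d^r − 1 consecutive integers. -/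
/-!
The class `m dᵏ + dᵏ⁺¹ℤ` with `0 < m < d` consists exactly of the integers whose `d`-adic
valuation is `k` and whose base-`d` digit at position `k` is `m`. So every `x` lies in at most
one class, the one given by its valuation and its least significant nonzero digit, and such a
class with `k < r` exists iff the valuation of `x` is below `r`, i.e. iff `dʳ ∤ x`.
-/

namespace Int

variable {d x : ℤ} {k : ℕ}

theorem pow_succ_dvd_sub_mul_pow_iff (hd : d ≠ 0) (m : ℤ) :
    d ^ (k + 1) ∣ x - m * d ^ k ↔ d ^ k ∣ x ∧ d ∣ x / d ^ k - m := by
  have hdk : d ^ k ≠ 0 := pow_ne_zero k hd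
  have key (q : ℤ) : d ^ (k + 1) ∣ d ^ k * q - m * d ^ k ↔ d ∣ q - m := by
    rw [pow_succ, show d ^ k * q - m * d ^ k = d ^ k * (q - m) by ring,
      mul_dvd_mul_iff_left hdk]
  constructor
  · intro h
    obtain ⟨q, rfl⟩ : d ^ k ∣ x := by
      simpa using ((pow_dvd_pow d k.le_succ).trans h).add (dvd_mul_left _ m)
    rw [Int.mul_ediv_cancel_left _ hdk]
    exact ⟨dvd_mul_right _ _, (key q).1 h⟩
  · rintro ⟨⟨q, rfl⟩, h⟩
    rw [Int.mul_ediv_cancel_left _ hdk] at h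
    exact (key q).2 h

theorem pow_succ_dvd_iff (hd : d ≠ 0) :
    d ^ (k + 1) ∣ x ↔ d ^ k ∣ x ∧ x / d ^ k % d = 0 := by
  rw [← sub_zero x, ← zero_mul (d ^ k), pow_succ_dvd_sub_mul_pow_iff hd, zero_mul, sub_zero,
    sub_zero]
  exact and_congr_right fun _ => Int.dvd_iff_emod_eq_zero

theorem dvd_sub_iff_emod_eq {q m : ℤ} (hm₀ : 0 ≤ m) (hmd : m < d) : d ∣ q - m ↔ q % d = m := by
  rw [← Int.modEq_iff_dvd, Int.ModEq, Int.emod_eq_of_lt hm₀ hmd, eq_comm]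

theorem mem_digit_class_iff (hd : 0 < d) (m : ℤ) :
    (0 < m ∧ m < d ∧ d ^ (k + 1) ∣ x - m * d ^ k) ↔
      emultiplicity d x = k ∧ x / d ^ k % d = m := by
  rw [emultiplicity_eq_coe, pow_succ_dvd_sub_mul_pow_iff hd.ne', pow_succ_dvd_iff hd.ne']
  constructor
  · rintro ⟨hm₀, hmd, h⟩
    rw [dvd_sub_iff_emod_eq hm₀.le hmd] at h
    exact ⟨⟨h.1, fun h' => hm₀.ne' (h.2 ▸ h'.2)⟩, h.2⟩
  · rintro ⟨⟨hx, hnot⟩, rfl⟩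
    have hm₀ : 0 < x / d ^ k % d :=
      lt_of_le_of_ne (Int.emod_nonneg _ hd.ne') (Ne.symm fun h => hnot ⟨hx, h⟩)
    refine ⟨hm₀, Int.emod_lt_of_pos _ hd, ?_⟩
    rw [dvd_sub_iff_emod_eq hm₀.le (Int.emod_lt_of_pos _ hd)]
    exact ⟨hx, rfl⟩

end Int

def MemDegreeClass (d : ℕ) (km : ℕ × ℕ) (x : ℤ) : Prop :=
  1 ≤ km.2 ∧ km.2 ≤ d - 1 ∧ (d : ℤ) ^ (km.1 + 1) ∣ x - (km.2 : ℤ) * (d : ℤ) ^ km.1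

section MemDegreeClass

variable {d : ℕ} {x : ℤ}

theorem memDegreeClass_iff (hd : 0 < d) (km : ℕ × ℕ) :
    MemDegreeClass d km x ↔ emultiplicity (d : ℤ) x = km.1 ∧ x / (d : ℤ) ^ km.1 % d = km.2 := by
  have hm : (1 ≤ km.2 ∧ km.2 ≤ d - 1) ↔ (0 < (km.2 : ℤ) ∧ (km.2 : ℤ) < d) := by omega
  rw [MemDegreeClass, ← and_assoc, hm, and_assoc, Int.mem_digit_class_iff (by exact_mod_cast hd)]

theorem MemDegreeClass.unique (hd : 0 < d) {km km' : ℕ × ℕ} (h : MemDegreeClass d km x)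
    (h' : MemDegreeClass d km' x) : km = km' := by
  rw [memDegreeClass_iff hd] at h h'
  have hk : km.1 = km'.1 := by exact_mod_cast h.1.symm.trans h'.1
  refine Prod.ext hk ?_
  rw [← hk] at h'
  exact_mod_cast h.2.symm.trans h'.2

theorem exists_memDegreeClass_iff (hd : 0 < d) (r : ℕ) :
    (∃ km : ℕ × ℕ, km.1 < r ∧ MemDegreeClass d km x) ↔ ¬(d : ℤ) ^ r ∣ x := by
  simp_rw [memDegreeClass_iff hd, ← emultiplicity_lt_iff_not_dvd]
  constructor
  · rintro ⟨km, hk, hv, -⟩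
    rw [hv]
    exact_mod_cast hk
  · intro h
    lift emultiplicity (d : ℤ) x to ℕ using h.ne_top with k
    have hdigit : 0 ≤ x / (d : ℤ) ^ k % d := Int.emod_nonneg _ (by exact_mod_cast hd.ne')
    exact ⟨(k, (x / (d : ℤ) ^ k % d).toNat), by exact_mod_cast h, rfl,
      (Int.toNat_of_nonneg hdigit).symm⟩

end MemDegreeClass

theorem degree_system_exact_cover_general
    (d r : ℕ) (hd : 2 ≤ d) :
    (∀ x : ℤ, 1 ≤ x → x ≤ (d : ℤ) ^ r - 1 →
      ∃! km : ℕ × ℕ, km.1 < r ∧ 1 ≤ km.2 ∧ km.2 ≤ d - 1 ∧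
        ((d : ℤ) ^ (km.1 + 1)) ∣ x - (km.2 : ℤ) * (d : ℤ) ^ km.1) ∧
    (∀ x : ℤ,
      (¬∃ km : ℕ × ℕ, km.1 < r ∧ 1 ≤ km.2 ∧ km.2 ≤ d - 1 ∧
        ((d : ℤ) ^ (km.1 + 1)) ∣ x - (km.2 : ℤ) * (d : ℤ) ^ km.1) ↔ ((d : ℤ) ^ r) ∣ x) := by
  have hd₀ : 0 < d := by omega
  refine ⟨fun x hx₁ hx₂ => ?_, fun x => not_iff_comm.1 (exists_memDegreeClass_iff hd₀ r).symm⟩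
  have hx : ¬(d : ℤ) ^ r ∣ x := fun h => by linarith [Int.le_of_dvd (by omega) h]
  obtain ⟨km, hkm⟩ := (exists_memDegreeClass_iff hd₀ r).2 hx
  exact ⟨km, hkm, fun km' hkm' => MemDegreeClass.unique hd₀ hkm'.2 hkm.2⟩

/-- The regulated filling of a saturated correct degree-system: the classes
`m·dᵏ + dᵏ⁺¹ℤ` (`0 ≤ k < r`, `1 ≤ m ≤ d-1`) cover each `x` with `1 ≤ x ≤ dʳ - 1`
exactly once, and miss `x` iff `dʳ ∣ x`. -/
theorem degree_system_exact_cover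
    (d r : ℕ) (hd : 2 ≤ d) (hr : 1 ≤ r) :
    (∀ x : ℤ, 1 ≤ x → x ≤ (d : ℤ) ^ r - 1 →
      ∃! km : ℕ × ℕ, km.1 < r ∧ 1 ≤ km.2 ∧ km.2 ≤ d - 1 ∧
        ((d : ℤ) ^ (km.1 + 1)) ∣ x - (km.2 : ℤ) * (d : ℤ) ^ km.1) ∧
    (∀ x : ℤ,
      (¬∃ km : ℕ × ℕ, km.1 < r ∧ 1 ≤ km.2 ∧ km.2 ≤ d - 1 ∧
        ((d : ℤ) ^ (km.1 + 1)) ∣ x - (km.2 : ℤ) * (d : ℤ) ^ km.1) ↔ ((d : ℤ) ^ r) ∣ x) :=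
  degree_system_exact_cover_general d r hd
end

section
/- Fix d ≥ 2 and write n = a(d−1) + b with 0 ≤ b < d−1. Consider the multiset of moduli consisting of d−1 copies of each of d, d², …, d^a together with b copies of d^{a+1}. Then the maximum, over all choices of shifts, of the number of consecutive integers fully covered by the union of the corresponding residue classes equals d^a(1 + b) − 1. -/
/-!
Take shifts `(j + 1) dᵏ` for the modulus `dᵏ⁺¹` and `(j + 1) dᵃ` for `dᵃ⁺¹`. A nonzero integer `x`
is then covered by the class of its lowest nonzero base-`d` digit below position `a`, and if
`dᵃ ∣ x` with `0 < x < dᵃ (1 + b)`, by one of the `b` classes modulo `dᵃ⁺¹`; so `1, …, dᵃ (1 + b) - 1`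
is covered. Conversely, a run of length `L = dᵃ (1 + b)` meets a class modulo `dᵏ⁺¹` in at most
`L / dᵏ⁺¹` points and a class modulo `dᵃ⁺¹ ≥ L` in at most one, so all the classes together
cover at most `(1 + b) (dᵃ - 1) + b = L - 1` of its points.
-/

open Finset

theorem card_filter_dvd_sub_Ico_le {c t L : ℕ} (hL : L ≤ c * t) (s m : ℤ) :
    #{x ∈ Ico m (m + L) | (c : ℤ) ∣ x - s} ≤ t := by
  calc #{x ∈ Ico m (m + L) | (c : ℤ) ∣ x - s} ≤ #(Ico (0 : ℤ) t) := by
        refine card_le_card_of_injOn (fun x => (x - m) / c) (fun x hx => ?_) fun x hx y hy hxy => ?_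
        · simp only [coe_filter, mem_Ico, Set.mem_ofPred_eq] at hx
          simp only [coe_Ico, Set.mem_Ico]
          have hLtc : (L : ℤ) ≤ t * c := by rw [mul_comm]; exact_mod_cast hL
          exact ⟨Int.ediv_nonneg (by omega) (by omega), Int.ediv_lt_of_lt_mul (by nlinarith) (by omega)⟩
        · simp only [coe_filter, mem_Ico, Set.mem_ofPred_eq] at hx hy hxy
          have hmod : (x - m) % c = (y - m) % c :=
            Int.ModEq.eq <| Int.modEq_iff_dvd.2 <| by simpa using dvd_sub hy.2 hx.2
          have hx_eq := Int.mul_ediv_add_emod (x - m) c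
          rw [hxy, hmod] at hx_eq
          linarith [Int.mul_ediv_add_emod (y - m) c]
    _ = t := by simp

theorem le_sum_of_forall_exists_dvd_sub {ι : Type*} [Fintype ι] {c t : ι → ℕ} {L : ℕ}
    (hL : ∀ i, L ≤ c i * t i) {s : ι → ℤ} {m : ℤ}
    (hcov : ∀ x ∈ Set.Ico m (m + L), ∃ i, (c i : ℤ) ∣ x - s i) : L ≤ ∑ i, t i := by
  classical
  calc L = #(Ico m (m + L)) := by simp
    _ ≤ #(univ.biUnion fun i => {x ∈ Ico m (m + L) | (c i : ℤ) ∣ x - s i}) := by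
        refine card_le_card fun x hx => ?_
        obtain ⟨i, hi⟩ := hcov x (by simpa using hx)
        exact mem_biUnion.2 ⟨i, mem_univ i, mem_filter.2 ⟨hx, hi⟩⟩
    _ ≤ ∑ i, #{x ∈ Ico m (m + L) | (c i : ℤ) ∣ x - s i} := card_biUnion_le
    _ ≤ ∑ i, t i := sum_le_sum fun i _ => card_filter_dvd_sub_Ico_le (hL i) _ _

theorem exists_lt_modEq_succ_mul_pow {d : ℕ} (hd : 0 < d) {a : ℕ} {n : ℤ}
    (hn : ¬ (d : ℤ) ^ a ∣ n) :
    ∃ k < a, ∃ j : ℕ, j + 1 < d ∧ ((j + 1) * d ^ k : ℤ) ≡ n [ZMOD d ^ (k + 1)] := by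
  induction a generalizing n with
  | zero => simp at hn
  | succ a ih =>
    by_cases hdn : (d : ℤ) ∣ n
    · obtain ⟨n, rfl⟩ := hdn
      obtain ⟨k, hk, j, hj, hmod⟩ := ih fun h => hn (by rw [pow_succ']; exact mul_dvd_mul_left _ h)
      exact ⟨k + 1, by omega, j, hj, by convert hmod.mul_left' (c := d) using 1 <;> ring⟩
    · have hpos : 0 < n % d := lt_of_le_of_ne (Int.emod_nonneg _ (by omega))
        fun h => hdn (Int.dvd_of_emod_eq_zero h.symm)
      have hlt : n % d < d := Int.emod_lt_of_pos _ (by omega)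
      refine ⟨0, by omega, (n % d).toNat - 1, by omega, ?_⟩
      have hdigit : ((((n % d).toNat - 1 : ℕ) : ℤ) + 1) = n % d := by omega
      simpa [hdigit] using Int.mod_modEq n d

section DegreeFilling

variable (d a b : ℕ)

def degreeFillingModulus : (Fin a × Fin (d - 1)) ⊕ Fin b → ℕ :=
  Sum.elim (fun p => d ^ ((p.1 : ℕ) + 1)) fun _ => d ^ (a + 1)

def degreeFillingShift : (Fin a × Fin (d - 1)) ⊕ Fin b → ℤ :=
  Sum.elim (fun p => ((p.2 : ℕ) + 1) * (d : ℤ) ^ (p.1 : ℕ)) fun j => ((j : ℕ) + 1) * (d : ℤ) ^ a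

/-- The most points a run of length `dᵃ (1 + b)` can have in one class modulo
`degreeFillingModulus d a b i`. -/
def degreeFillingCount : (Fin a × Fin (d - 1)) ⊕ Fin b → ℕ :=
  Sum.elim (fun p => d ^ (a - ((p.1 : ℕ) + 1)) * (1 + b)) fun _ => 1

variable {d a b}

theorem exists_dvd_sub_degreeFillingShift (hd : 0 < d) {x : ℤ}
    (hx : x ∈ Set.Ico 1 ((d : ℤ) ^ a * (1 + b))) :
    ∃ i, (degreeFillingModulus d a b i : ℤ) ∣ x - degreeFillingShift d a b i := by
  obtain ⟨hx1, hx2⟩ := hx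
  have hda : (0 : ℤ) < d ^ a := by positivity
  by_cases hdx : (d : ℤ) ^ a ∣ x
  · obtain ⟨v, rfl⟩ := hdx
    have hv1 : 0 < v := pos_of_mul_pos_right (by omega) hda.le
    have hv2 : v < 1 + b := lt_of_mul_lt_mul_left hx2 hda.le
    refine ⟨Sum.inr ⟨(v - 1).toNat, by omega⟩, ?_⟩
    have hj : (((v - 1).toNat : ℕ) : ℤ) + 1 = v := by omega
    simp only [degreeFillingShift, Sum.elim_inr, hj, mul_comm, sub_self, dvd_zero]
  · obtain ⟨k, hk, j, hj, hmod⟩ := exists_lt_modEq_succ_mul_pow hd hdx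
    exact ⟨Sum.inl (⟨k, hk⟩, ⟨j, by omega⟩), by simpa [degreeFillingModulus,
      degreeFillingShift] using hmod.dvd⟩

theorem sum_degreeFillingCount (hd : 0 < d) :
    ∑ i, degreeFillingCount d a b i = d ^ a * (1 + b) - 1 := by
  have hgeom : (∑ k : Fin a, d ^ (a - ((k : ℕ) + 1))) * (d - 1) = d ^ a - 1 := by
    calc (∑ k : Fin a, d ^ (a - ((k : ℕ) + 1))) * (d - 1)
        = (∑ k ∈ range a, d ^ (a - 1 - k)) * (d - 1) := by
          rw [Fin.sum_univ_eq_sum_range (fun k => d ^ (a - (k + 1)))]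
          exact congrArg (· * (d - 1)) (sum_congr rfl fun k _ => by congr 1; omega)
      _ = d ^ a - 1 := by rw [sum_range_reflect (d ^ ·) a, geom_sum_mul_of_one_le hd]
  have hinl : ∑ k : Fin a, (d - 1) * (d ^ (a - ((k : ℕ) + 1)) * (1 + b)) =
      (1 + b) * (d ^ a - 1) := by
    rw [← hgeom, sum_mul, mul_sum]
    exact sum_congr rfl fun _ _ => by ring
  simp only [degreeFillingCount, Fintype.sum_sum_type, Sum.elim_inl, Sum.elim_inr,
    Fintype.sum_prod_type, sum_const, card_univ, Fintype.card_fin, smul_eq_mul, mul_one]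
  rw [hinl, Nat.mul_sub_one, mul_comm (1 + b)]
  have := Nat.le_mul_of_pos_left (1 + b) (Nat.one_le_pow a d hd)
  omega

theorem le_degreeFillingModulus_mul_count (hb : b < d) (i : (Fin a × Fin (d - 1)) ⊕ Fin b) :
    d ^ a * (1 + b) ≤ degreeFillingModulus d a b i * degreeFillingCount d a b i := by
  rcases i with ⟨k, j⟩ | j
  · simp only [degreeFillingModulus, degreeFillingCount, Sum.elim_inl, ← mul_assoc,
      pow_mul_pow_sub _ k.isLt, le_refl]
  · simp only [degreeFillingModulus, degreeFillingCount, Sum.elim_inr, mul_one, pow_succ]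
    exact Nat.mul_le_mul_left _ (by omega)

theorem not_forall_exists_dvd_sub_degreeFillingModulus (hb : b < d)
    (s : (Fin a × Fin (d - 1)) ⊕ Fin b → ℤ) (m : ℤ) :
    ¬ ∀ x ∈ Set.Ico m (m + (d ^ a * (1 + b) : ℕ)),
      ∃ i, (degreeFillingModulus d a b i : ℤ) ∣ x - s i := by
  intro hcov
  have hcount := le_sum_of_forall_exists_dvd_sub (le_degreeFillingModulus_mul_count hb) hcov
  rw [sum_degreeFillingCount (by omega)] at hcount
  have : 0 < d ^ a * (1 + b) := Nat.mul_pos (Nat.pow_pos (by omega)) (by omega)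
  omega

end DegreeFilling

theorem degree_filling_max_run_general
    (d a b : ℕ) (hb : b < d - 1)
    (M : (Fin a × Fin (d - 1)) ⊕ Fin b → ℕ)
    (hM1 : ∀ k j, M (Sum.inl (k, j)) = d ^ ((k : ℕ) + 1))
    (hM2 : ∀ j, M (Sum.inr j) = d ^ (a + 1)) :
    IsGreatest {ℓ : ℕ | ∃ (s : (Fin a × Fin (d - 1)) ⊕ Fin b → ℤ) (m : ℤ),
        ∀ x ∈ Set.Ico m (m + (ℓ : ℤ)), ∃ i, (M i : ℤ) ∣ x - s i}
      (d ^ a * (1 + b) - 1) := by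
  obtain rfl : M = degreeFillingModulus d a b := funext <| Sum.rec (fun p => hM1 p.1 p.2) hM2
  have hL : 0 < d ^ a * (1 + b) := Nat.mul_pos (Nat.pow_pos (by omega)) (by omega)
  refine ⟨⟨degreeFillingShift d a b, 1, fun x hx => exists_dvd_sub_degreeFillingShift (by omega)
    ⟨hx.1, by have := hx.2; push_cast [Nat.cast_sub hL] at this; linarith⟩⟩, ?_⟩
  rintro ℓ ⟨s, m, hcov⟩
  by_contra! hℓ
  exact not_forall_exists_dvd_sub_degreeFillingModulus (by omega) s m
    fun x hx => hcov x ⟨hx.1, hx.2.trans_le (by gcongr; omega)⟩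

/-- Exact maximal covered run for the regulated degree filling with `d-1` copies
of `d,…,dᵃ` and `b` copies of `dᵃ⁺¹`: the maximum over shifts of the length of a
fully covered run of consecutive integers equals `dᵃ(1+b) - 1`. -/
theorem degree_filling_max_run
    (d a b : ℕ) (hd : 2 ≤ d) (hb : b < d - 1)
    (M : (Fin a × Fin (d - 1)) ⊕ Fin b → ℕ)
    (hM1 : ∀ k j, M (Sum.inl (k, j)) = d ^ ((k : ℕ) + 1))
    (hM2 : ∀ j, M (Sum.inr j) = d ^ (a + 1)) :
    IsGreatest {ℓ : ℕ | ∃ (s : (Fin a × Fin (d - 1)) ⊕ Fin b → ℤ) (m : ℤ),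
        ∀ x ∈ Set.Ico m (m + (ℓ : ℤ)), ∃ i, (M i : ℤ) ∣ x - s i}
      (d ^ a * (1 + b) - 1) :=
  degree_filling_max_run_general d a b hb M hM1 hM2
end

section
/- Let q_1 = 3 < q_2 = 5 < … be the odd primes. For every n ≥ 3 there exist integers r_1, …, r_n such that the union of residue classes ⋃_{i=1}^n (r_i + q_i ℤ) contains q_{n−1} − 1 consecutive integers. -/
/-- Theorem 13 of the paper: for `n ≥ 3` there are shifts of the odd-prime grids
`q₁,…,qₙ` whose union of residue classes contains `q_{n-1} - 1` consecutive
integers (i.e. `msr_n(SP₁) ≥ p_{n-1}`). -/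
theorem max_series_ge_previous_prime
    (q : ℕ → ℕ)
    (hq : ∀ k, 1 ≤ k → Nat.Prime (q k) ∧ Odd (q k))
    (hmono : ∀ k l, 1 ≤ k → k < l → q k < q l)
    (hsurj : ∀ p, Nat.Prime p → Odd p → ∃ k, 1 ≤ k ∧ q k = p)
    (n : ℕ) (hn : 3 ≤ n) :
    ∃ (r : ℕ → ℤ) (m : ℤ), ∀ x ∈ Set.Ico m (m + ((q (n - 1) : ℤ) - 1)),
      ∃ i, 1 ≤ i ∧ i ≤ n ∧ (q i : ℤ) ∣ x - r i := by
  have hn1 : 1 ≤ n - 1 := by omega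
  obtain ⟨hQp, hQo⟩ := hq (n - 1) hn1
  obtain ⟨h, hh⟩ := hQo
  have hQ : (q (n - 1) : ℤ) = 2 * h + 1 := by push_cast [hh]; ring
  refine ⟨fun i => if i = n then 1 else if i = n - 1 then 0 else ((q i : ℤ) + 1) / 2,
    1 - (h : ℤ), ?_⟩
  intro x hx
  obtain ⟨hx1, hx2⟩ := hx
  rw [hQ] at hx2
  by_cases hx0 : x = 0
  · refine ⟨n - 1, hn1, by omega, ?_⟩
    simp only [show n - 1 ≠ n by omega, if_false, if_pos rfl, if_neg]
    simp [hx0]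
  by_cases hxone : x = 1
  · exact ⟨n, by omega, le_refl n, by simp [hxone]⟩
  -- main case: 2x - 1 is an odd number with |2x-1| ≥ 3, all of whose prime
  -- factors are odd primes < q (n-1)
  have hN2 : 2 ≤ (2 * x - 1).natAbs := by omega
  have hNle : ((2 * x - 1).natAbs : ℤ) ≤ 2 * (h : ℤ) - 1 := by omega
  set p := Nat.minFac (2 * x - 1).natAbs with hp
  have hpp : p.Prime := Nat.minFac_prime (by omega)
  have hpdvd : (p : ℤ) ∣ 2 * x - 1 := by
    have h1 : (p : ℤ) ∣ ((2 * x - 1).natAbs : ℤ) :=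
      Int.natCast_dvd_natCast.mpr (Nat.minFac_dvd _)
    exact h1.trans (Int.natAbs_dvd.mpr dvd_rfl)
  have hpodd : Odd p := by
    refine hpp.odd_of_ne_two ?_
    intro h2
    rw [h2] at hpdvd
    omega
  obtain ⟨k, hk1, hkq⟩ := hsurj p hpp hpodd
  have hpleN : p ≤ (2 * x - 1).natAbs := Nat.minFac_le (by omega)
  have hpleZ : (p : ℤ) ≤ 2 * (h : ℤ) - 1 := le_trans (by exact_mod_cast hpleN) hNle
  have hkn : k < n - 1 := by
    by_contra hc
    push_neg at hc
    have hle : q (n - 1) ≤ q k := by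
      rcases eq_or_lt_of_le hc with heq | hlt
      · exact le_of_eq (by rw [heq])
      · exact le_of_lt (hmono (n - 1) k hn1 hlt)
    rw [hkq] at hle
    have : (q (n - 1) : ℤ) ≤ (p : ℤ) := by exact_mod_cast hle
    omega
  refine ⟨k, hk1, by omega, ?_⟩
  have hkn' : k ≠ n := by omega
  have hkn'' : k ≠ n - 1 := by omega
  simp only [if_neg hkn', if_neg hkn'']
  obtain ⟨t, ht⟩ := hpodd
  have hqk : (q k : ℤ) = 2 * (t : ℤ) + 1 := by rw [hkq]; push_cast [ht]; ring
  have hdiv2 : ((q k : ℤ) + 1) / 2 = (t : ℤ) + 1 := by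
    rw [hqk]
    omega
  rw [hdiv2]
  have hqkdvd : (q k : ℤ) ∣ 2 * x - 1 := by rw [hkq]; exact hpdvd
  have h2 : (q k : ℤ) ∣ 2 * (x - ((t : ℤ) + 1)) := by
    have heq : 2 * (x - ((t : ℤ) + 1)) = (2 * x - 1) - (2 * (t : ℤ) + 1) := by ring
    rw [heq]
    exact dvd_sub hqkdvd (hqk ▸ dvd_refl _)
  have hprime : Prime ((q k : ℕ) : ℤ) := Nat.prime_iff_prime_int.mp (hkq ▸ hpp)
  rcases hprime.dvd_mul.mp h2 with hd2 | hgoal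
  · exfalso
    have hle2 : (q k : ℤ) ≤ 2 := Int.le_of_dvd (by norm_num) hd2
    have h2p : 2 ≤ p := hpp.two_le
    have h3 : 3 ≤ q k := by rw [hkq]; omega
    have h3' : (3 : ℤ) ≤ (q k : ℤ) := by exact_mod_cast h3
    omega
  · exact hgoal
end
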